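/- arXiv:1807.01282 — 3 statements merged into one kernel-verified Lean document; each statement's English description precedes it below -/
import Mathlib

section
/- Let T be a bounded operator on a Hilbert space such that for some constants c > 0: (i) Im⟨φ, Tφ⟩ + c‖Tφ‖² ≥ d‖φ‖² for all φ, and (ii) -Im⟨φ, T*φ⟩ + c‖T*φ‖² ≥ d‖φ‖² for all φ, with d > 0. Then T is bijective with bounded inverse. -/
open ContinuousLinearMap

/-!
Since `|Im⟨φ, Aφ⟩| ≤ ‖φ‖ ‖Aφ‖`, both hypotheses give `d ‖φ‖² ≤ ‖φ‖ ‖Aφ‖ + c ‖Aφ‖²` for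
`A = T, T†`, which forces `‖Aφ‖ ≥ ε ‖φ‖`. So `T` has closed range, and `T†` is injective, so
that range is also dense; the open mapping theorem makes the inverse bounded.
-/

/-- If `t < s`, then `c t² ≤ |c| s t`, so `d s² ≤ (1 + |c|) s t`; otherwise `t ≥ s`. -/
lemma min_mul_le_of_mul_sq_le {s t c d : ℝ} (hs : 0 ≤ s) (ht : 0 ≤ t)
    (h : d * s ^ 2 ≤ s * t + c * t ^ 2) : min 1 (d / (1 + |c|)) * s ≤ t := by
  rcases le_or_gt s t with hst | hts
  · exact (mul_le_of_le_one_left hs (min_le_left _ _)).trans hst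
  have hcs : c * t ^ 2 ≤ |c| * (s * t) := by
    calc c * t ^ 2 ≤ |c| * t ^ 2 := by gcongr; exact le_abs_self c
      _ = |c| * (t * t) := by ring
      _ ≤ |c| * (s * t) := by gcongr
  have hds : d * s * s ≤ (1 + |c|) * t * s := by nlinarith
  have hdt : d * s ≤ (1 + |c|) * t := by
    rcases hs.eq_or_lt with rfl | hs'
    · simp only [mul_zero]; positivity
    · exact le_of_mul_le_mul_right hds hs'
  calc min 1 (d / (1 + |c|)) * s ≤ d / (1 + |c|) * s := by gcongr; exact min_le_right _ _
    _ ≤ t := by rw [div_mul_eq_mul_div, div_le_iff₀ (by positivity)]; linarith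

lemma exists_antilipschitzWith_of_mul_sq_le {𝕜 E F : Type*} [NontriviallyNormedField 𝕜]
    [SeminormedAddCommGroup E] [SeminormedAddCommGroup F] [NormedSpace 𝕜 E] [NormedSpace 𝕜 F]
    (A : E →L[𝕜] F) {c d : ℝ} (hd : 0 < d)
    (h : ∀ x, d * ‖x‖ ^ 2 ≤ ‖x‖ * ‖A x‖ + c * ‖A x‖ ^ 2) : ∃ K, AntilipschitzWith K A := by
  set ε := min 1 (d / (1 + |c|))
  have hε : 0 < ε := lt_min one_pos (by positivity)
  refine ⟨⟨ε⁻¹, by positivity⟩, A.antilipschitz_of_bound fun x ↦ ?_⟩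
  change ‖x‖ ≤ ε⁻¹ * ‖A x‖
  rw [← div_eq_inv_mul, le_div_iff₀ hε, mul_comm]
  exact min_mul_le_of_mul_sq_le (norm_nonneg _) (norm_nonneg _) (h x)

lemma Complex.abs_im_inner_le_norm_mul_norm {E : Type*} [SeminormedAddCommGroup E]
    [InnerProductSpace ℂ E] (x y : E) : |(inner ℂ x y).im| ≤ ‖x‖ * ‖y‖ :=
  (Complex.abs_im_le_norm _).trans (norm_inner_le_norm x y)

lemma ContinuousLinearMap.bijective_of_antilipschitzWith_of_injective_adjoint {𝕜 E F : Type*}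
    [RCLike 𝕜] [NormedAddCommGroup E] [NormedAddCommGroup F] [InnerProductSpace 𝕜 E]
    [InnerProductSpace 𝕜 F] [CompleteSpace E] [CompleteSpace F] (T : E →L[𝕜] F) {K : NNReal}
    (hT : AntilipschitzWith K T) (hT' : Function.Injective (adjoint T)) :
    Function.Bijective T := by
  rw [bijective_iff_dense_range_and_antilipschitz]
  refine ⟨?_, K, hT⟩
  rw [Submodule.topologicalClosure_eq_top_iff, orthogonal_range]
  exact LinearMap.ker_eq_bot.mpr hT'

theorem invertible_of_coercive_general {ℋ : Type*} [NormedAddCommGroup ℋ] [InnerProductSpace ℂ ℋ]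
    [CompleteSpace ℋ] (T : ℋ →L[ℂ] ℋ) (c d : ℝ) (hd : 0 < d)
    (h1 : ∀ φ : ℋ, d * ‖φ‖ ^ 2 ≤ (inner ℂ φ (T φ) : ℂ).im + c * ‖T φ‖ ^ 2)
    (h2 : ∀ φ : ℋ, d * ‖φ‖ ^ 2 ≤ -(inner ℂ φ ((adjoint T) φ) : ℂ).im + c * ‖(adjoint T) φ‖ ^ 2) :
    ∃ S : ℋ →L[ℂ] ℋ, S.comp T = 1 ∧ T.comp S = 1 := by
  obtain ⟨K, hT⟩ := exists_antilipschitzWith_of_mul_sq_le T hd fun φ ↦ (h1 φ).trans <| by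
    gcongr
    exact (le_abs_self _).trans (Complex.abs_im_inner_le_norm_mul_norm _ _)
  obtain ⟨K', hT'⟩ := exists_antilipschitzWith_of_mul_sq_le (adjoint T) hd fun φ ↦ (h2 φ).trans <| by
    gcongr
    exact (neg_le_abs _).trans (Complex.abs_im_inner_le_norm_mul_norm _ _)
  obtain ⟨u, rfl⟩ := isUnit_iff_bijective.mpr <|
    T.bijective_of_antilipschitzWith_of_injective_adjoint hT hT'.injective
  exact ⟨↑u⁻¹, u.inv_mul, u.mul_inv⟩

/-- If `Im⟨φ, Tφ⟩ + c‖Tφ‖² ≥ d‖φ‖²` and `-Im⟨φ, T*φ⟩ + c‖T*φ‖² ≥ d‖φ‖²` for all `φ`,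
with `c, d > 0`, then `T` is bijective with bounded inverse. -/
theorem invertible_of_coercive {ℋ : Type*} [NormedAddCommGroup ℋ] [InnerProductSpace ℂ ℋ]
    [CompleteSpace ℋ] (T : ℋ →L[ℂ] ℋ) (c d : ℝ) (hc : 0 < c) (hd : 0 < d)
    (h1 : ∀ φ : ℋ, d * ‖φ‖ ^ 2 ≤ (inner ℂ φ (T φ) : ℂ).im + c * ‖T φ‖ ^ 2)
    (h2 : ∀ φ : ℋ, d * ‖φ‖ ^ 2 ≤ -(inner ℂ φ ((adjoint T) φ) : ℂ).im + c * ‖(adjoint T) φ‖ ^ 2) :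
    ∃ S : ℋ →L[ℂ] ℋ, S.comp T = 1 ∧ T.comp S = 1 :=
  invertible_of_coercive_general T c d hd h1 h2
end

section
/- Let B be a bounded symmetric operator on a Hilbert space and E an orthogonal projection with complement E^⊥ = 1 - E. The following are equivalent: (a) there exists c > 0 with E B E ≥ c E; (b) there exist a > 0, b > 0 with B ≥ a E - b E^⊥; (c) there exist a > 0, b > 0 with B ≥ a·1 - (a + b)E^⊥. (All inequalities in the sense of quadratic forms.) -/
/-!
Splitting `ψ = Eψ + E^⊥ψ`, the form `⟪ψ, Bψ⟫` is the compression `⟪Eψ, BEψ⟫` plus cross terms and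
`⟪E^⊥ψ, BE^⊥ψ⟫`, all bounded by `‖B‖`. If the compression is coercive, AM-GM absorbs the cross
terms into half of it and a multiple of `‖E^⊥ψ‖²`, giving (a) ⇒ (b); conversely (b) restricted to
`ran E` is (a). Since `⟪ψ, Eψ⟫ + ⟪ψ, E^⊥ψ⟫ = ‖ψ‖²`, (b) and (c) are the same inequality.
-/

open ContinuousLinearMap RCLike
open scoped InnerProductSpace

section

variable {𝕜 H : Type*} [RCLike 𝕜] [NormedAddCommGroup H] [InnerProductSpace 𝕜 H]

namespace ContinuousLinearMap

theorem neg_opNorm_mul_le_re_inner_apply (B : H →L[𝕜] H) (u v : H) :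
    -(‖B‖ * ‖u‖ * ‖v‖) ≤ re ⟪u, B v⟫_𝕜 := by
  have h : ‖⟪u, B v⟫_𝕜‖ ≤ ‖B‖ * ‖u‖ * ‖v‖ := calc
    ‖⟪u, B v⟫_𝕜‖ ≤ ‖u‖ * ‖B v‖ := norm_inner_le_norm u (B v)
    _ ≤ ‖u‖ * (‖B‖ * ‖v‖) := by gcongr; exact B.le_opNorm v
    _ = ‖B‖ * ‖u‖ * ‖v‖ := by ring
  exact neg_le_of_abs_le ((abs_re_le_norm _).trans h)

theorem le_re_inner_add_apply_add (B : H →L[𝕜] H) {c : ℝ} (hc : 0 < c) {x : H}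
    (hx : c * ‖x‖ ^ 2 ≤ re ⟪x, B x⟫_𝕜) (y : H) :
    c / 2 * ‖x‖ ^ 2 - (2 * ‖B‖ ^ 2 / c + ‖B‖) * ‖y‖ ^ 2 ≤ re ⟪x + y, B (x + y)⟫_𝕜 := by
  have hexpand : re ⟪x + y, B (x + y)⟫_𝕜 =
      re ⟪x, B x⟫_𝕜 + re ⟪x, B y⟫_𝕜 + re ⟪y, B x⟫_𝕜 + re ⟪y, B y⟫_𝕜 := by
    simp only [map_add, inner_add_left, inner_add_right]
    ring
  have hamgm : 2 * ‖B‖ * ‖x‖ * ‖y‖ ≤ c / 2 * ‖x‖ ^ 2 + 2 * ‖B‖ ^ 2 / c * ‖y‖ ^ 2 := by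
    have hsq : 0 ≤ (c * ‖x‖ - 2 * ‖B‖ * ‖y‖) ^ 2 / (2 * c) := by positivity
    have hsq_eq : (c * ‖x‖ - 2 * ‖B‖ * ‖y‖) ^ 2 / (2 * c) =
        c / 2 * ‖x‖ ^ 2 + 2 * ‖B‖ ^ 2 / c * ‖y‖ ^ 2 - 2 * ‖B‖ * ‖x‖ * ‖y‖ := by
      field_simp
      ring
    linarith
  have hyy : -(‖B‖ * ‖y‖ ^ 2) ≤ re ⟪y, B y⟫_𝕜 := by
    simpa only [mul_assoc, ← sq] using B.neg_opNorm_mul_le_re_inner_apply y y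
  linarith [B.neg_opNorm_mul_le_re_inner_apply x y, B.neg_opNorm_mul_le_re_inner_apply y x]

theorem mul_re_inner_apply_sub_mul_re_inner_one_sub_apply (T : H →L[𝕜] H) (a b : ℝ) (ψ : H) :
    a * re ⟪ψ, T ψ⟫_𝕜 - b * re ⟪ψ, (1 - T) ψ⟫_𝕜 =
      a * ‖ψ‖ ^ 2 - (a + b) * re ⟪ψ, (1 - T) ψ⟫_𝕜 := by
  have hsum : re ⟪ψ, T ψ⟫_𝕜 + re ⟪ψ, (1 - T) ψ⟫_𝕜 = ‖ψ‖ ^ 2 := by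
    rw [sub_apply, one_apply_eq_self, inner_sub_right, map_sub, inner_self_eq_norm_sq]
    ring
  rw [← hsum]
  ring

end ContinuousLinearMap

namespace IsStarProjection

variable [CompleteSpace H] {P : H →L[𝕜] H}

theorem apply_apply (hP : IsStarProjection P) (ψ : H) : P (P ψ) = P ψ := by
  rw [← mul_apply_eq_comp, hP.isIdempotentElem.eq]

theorem inner_apply_right (hP : IsStarProjection P) (x y : H) : ⟪x, P y⟫_𝕜 = ⟪P x, y⟫_𝕜 :=
  (hP.isSelfAdjoint.isSymmetric x y).symm

theorem re_inner_apply_self (hP : IsStarProjection P) (ψ : H) :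
    re ⟪ψ, P ψ⟫_𝕜 = ‖P ψ‖ ^ 2 := by
  rw [← inner_self_eq_norm_sq (𝕜 := 𝕜), ← hP.inner_apply_right, hP.apply_apply]

theorem re_inner_lower_bound_of_compression (hP : IsStarProjection P) (B : H →L[𝕜] H)
    {c b : ℝ} (hc : 0 < c) (hb : 2 * ‖B‖ ^ 2 / c + ‖B‖ ≤ b)
    (h : ∀ ψ, c * re ⟪ψ, P ψ⟫_𝕜 ≤ re ⟪ψ, P (B (P ψ))⟫_𝕜) (ψ : H) :
    c / 2 * re ⟪ψ, P ψ⟫_𝕜 - b * re ⟪ψ, (1 - P) ψ⟫_𝕜 ≤ re ⟪ψ, B ψ⟫_𝕜 := by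
  have hx : c * ‖P ψ‖ ^ 2 ≤ re ⟪P ψ, B (P ψ)⟫_𝕜 := by
    have := h ψ
    rwa [hP.re_inner_apply_self, hP.inner_apply_right] at this
  have hψ : P ψ + (1 - P) ψ = ψ := by simp
  have := B.le_re_inner_add_apply_add hc hx ((1 - P) ψ)
  rw [hψ] at this
  rw [hP.re_inner_apply_self, hP.one_sub.re_inner_apply_self]
  linarith [mul_le_mul_of_nonneg_right hb (sq_nonneg ‖(1 - P) ψ‖)]

theorem compression_lower_bound_of_re_inner (hP : IsStarProjection P) {B : H →L[𝕜] H}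
    {a b : ℝ} (h : ∀ ψ, a * re ⟪ψ, P ψ⟫_𝕜 - b * re ⟪ψ, (1 - P) ψ⟫_𝕜 ≤ re ⟪ψ, B ψ⟫_𝕜)
    (ψ : H) : a * re ⟪ψ, P ψ⟫_𝕜 ≤ re ⟪ψ, P (B (P ψ))⟫_𝕜 := by
  have hPψ : (1 - P) (P ψ) = 0 := by rw [← mul_apply_eq_comp, hP.one_sub_mul_self, zero_apply]
  have := h (P ψ)
  rw [hPψ, inner_zero_right, map_zero, mul_zero, sub_zero, hP.re_inner_apply_self,
    hP.apply_apply] at this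
  rwa [hP.re_inner_apply_self, hP.inner_apply_right]

end IsStarProjection

end

theorem projection_form_equivalences_general {ℋ : Type*} [NormedAddCommGroup ℋ]
    [InnerProductSpace ℂ ℋ] [CompleteSpace ℋ] (B E : ℋ →L[ℂ] ℋ)
    (hE : adjoint E = E) (hE2 : E.comp E = E) :
    ((∃ c > (0 : ℝ), ∀ ψ : ℋ,
        c * (inner ℂ ψ (E ψ) : ℂ).re ≤ (inner ℂ ψ (E (B (E ψ))) : ℂ).re) ↔
      (∃ a > (0 : ℝ), ∃ b > (0 : ℝ), ∀ ψ : ℋ,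
        a * (inner ℂ ψ (E ψ) : ℂ).re - b * (inner ℂ ψ ((1 - E) ψ) : ℂ).re ≤
          (inner ℂ ψ (B ψ) : ℂ).re)) ∧
    ((∃ a > (0 : ℝ), ∃ b > (0 : ℝ), ∀ ψ : ℋ,
        a * (inner ℂ ψ (E ψ) : ℂ).re - b * (inner ℂ ψ ((1 - E) ψ) : ℂ).re ≤
          (inner ℂ ψ (B ψ) : ℂ).re) ↔
      (∃ a > (0 : ℝ), ∃ b > (0 : ℝ), ∀ ψ : ℋ,
        a * ‖ψ‖ ^ 2 - (a + b) * (inner ℂ ψ ((1 - E) ψ) : ℂ).re ≤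
          (inner ℂ ψ (B ψ) : ℂ).re)) := by
  have hP : IsStarProjection E := ⟨hE2, hE⟩
  refine ⟨⟨?_, ?_⟩, ?_⟩
  · rintro ⟨c, hc, h⟩
    exact ⟨c / 2, by positivity, 2 * ‖B‖ ^ 2 / c + ‖B‖ + 1, by positivity,
      hP.re_inner_lower_bound_of_compression B hc (le_add_of_nonneg_right zero_le_one) h⟩
  · rintro ⟨a, ha, b, -, h⟩
    exact ⟨a, ha, hP.compression_lower_bound_of_re_inner h⟩
  · simp only [← RCLike.re_to_complex,
      E.mul_re_inner_apply_sub_mul_re_inner_one_sub_apply (𝕜 := ℂ)]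

/-- For bounded selfadjoint `B` and an orthogonal projection `E` with `E^⊥ = 1 - E`,
the following are equivalent (in the sense of quadratic forms):
(a) `EBE ≥ cE` for some `c > 0`;
(b) `B ≥ aE - bE^⊥` for some `a, b > 0`;
(c) `B ≥ a·1 - (a+b)E^⊥` for some `a, b > 0`. -/
theorem projection_form_equivalences {ℋ : Type*} [NormedAddCommGroup ℋ]
    [InnerProductSpace ℂ ℋ] [CompleteSpace ℋ] (B E : ℋ →L[ℂ] ℋ)
    (hB : adjoint B = B) (hE : adjoint E = E) (hE2 : E.comp E = E) :
    ((∃ c > (0 : ℝ), ∀ ψ : ℋ,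
        c * (inner ℂ ψ (E ψ) : ℂ).re ≤ (inner ℂ ψ (E (B (E ψ))) : ℂ).re) ↔
      (∃ a > (0 : ℝ), ∃ b > (0 : ℝ), ∀ ψ : ℋ,
        a * (inner ℂ ψ (E ψ) : ℂ).re - b * (inner ℂ ψ ((1 - E) ψ) : ℂ).re ≤
          (inner ℂ ψ (B ψ) : ℂ).re)) ∧
    ((∃ a > (0 : ℝ), ∃ b > (0 : ℝ), ∀ ψ : ℋ,
        a * (inner ℂ ψ (E ψ) : ℂ).re - b * (inner ℂ ψ ((1 - E) ψ) : ℂ).re ≤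
          (inner ℂ ψ (B ψ) : ℂ).re) ↔
      (∃ a > (0 : ℝ), ∃ b > (0 : ℝ), ∀ ψ : ℋ,
        a * ‖ψ‖ ^ 2 - (a + b) * (inner ℂ ψ ((1 - E) ψ) : ℂ).re ≤
          (inner ℂ ψ (B ψ) : ℂ).re)) :=
  projection_form_equivalences_general B E hE hE2
end

section
/- Let A₀ be the operator on ℓ²(ℤ) acting on basis vectors by A₀eₙ = -i·n·(e_{n+1} - e_{n-1}). Then for all k ∈ ℕ and n ∈ ℤ with n ≠ 0, ‖A₀ᵏeₙ‖ ≤ 2ᵏ·(|n| + k - 1)!/(|n| - 1)!. -/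
/-- The canonical basis vector `eₙ`, as a finitely supported function. -/
noncomputable def e (n : ℤ) : ℤ →₀ ℂ := Finsupp.single n 1

/-- The operator `A₀` acting on finite linear combinations of basis vectors by
`A₀ eₙ = -i n (e_{n+1} - e_{n-1})`. -/
noncomputable def A0 : Module.End ℂ (ℤ →₀ ℂ) :=
  Finsupp.lsum ℂ fun n : ℤ =>
    LinearMap.toSpanSingleton ℂ (ℤ →₀ ℂ)
      ((-Complex.I * (n : ℂ)) • (Finsupp.single (n + 1) 1 - Finsupp.single (n - 1) 1))

/-- The ℓ² norm of a finitely supported function. -/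
noncomputable def l2norm (x : ℤ →₀ ℂ) : ℝ := Real.sqrt (∑ m ∈ x.support, ‖x m‖ ^ 2)

/-!
The ℓ² norm of a finitely supported vector is bounded by its ℓ¹ norm, and the ℓ¹ norm is much
easier to control: `A₀` sends `eₘ` to a vector of ℓ¹ norm at most `2|m|`, so on vectors supported
in `[-N, N]` it multiplies the ℓ¹ norm by at most `2N`, while widening the support by one.
Since `A₀ᵏ eₙ` is supported in `[-(|n|+k), |n|+k]`, iterating gives
`‖A₀ᵏ eₙ‖₁ ≤ 2ᵏ |n| (|n|+1) ⋯ (|n|+k-1)`.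
-/

open Finsupp

noncomputable def l1norm {α : Type*} (x : α →₀ ℂ) : ℝ := ∑ m ∈ x.support, ‖x m‖

section l1norm

variable {α : Type*}

lemma l1norm_eq_sum_of_support_subset {x : α →₀ ℂ} {s : Finset α} (h : x.support ⊆ s) :
    l1norm x = ∑ m ∈ s, ‖x m‖ :=
  Finset.sum_subset h fun m _ hm => by simp [notMem_support_iff.mp hm]

lemma l1norm_nonneg (x : α →₀ ℂ) : 0 ≤ l1norm x :=
  Finset.sum_nonneg fun _ _ => norm_nonneg _

lemma l1norm_add_le (x y : α →₀ ℂ) : l1norm (x + y) ≤ l1norm x + l1norm y := by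
  classical
  rw [l1norm_eq_sum_of_support_subset support_add,
    l1norm_eq_sum_of_support_subset (Finset.subset_union_left (s₂ := y.support)),
    l1norm_eq_sum_of_support_subset (Finset.subset_union_right (s₁ := x.support)),
    ← Finset.sum_add_distrib]
  exact Finset.sum_le_sum fun m _ => norm_add_le (x m) (y m)

lemma l1norm_smul (c : ℂ) (x : α →₀ ℂ) : l1norm (c • x) = ‖c‖ * l1norm x := by
  rw [l1norm_eq_sum_of_support_subset support_smul, l1norm, Finset.mul_sum]
  simp only [Finsupp.smul_apply, smul_eq_mul, norm_mul]

lemma l1norm_sum_le {ι : Type*} (s : Finset ι) (f : ι → α →₀ ℂ) :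
    l1norm (∑ i ∈ s, f i) ≤ ∑ i ∈ s, l1norm (f i) := by
  classical
  induction s using Finset.induction with
  | empty => simp [l1norm]
  | insert i s hi ih =>
    rw [Finset.sum_insert hi, Finset.sum_insert hi]
    exact (l1norm_add_le _ _).trans (add_le_add_right ih _)

lemma l1norm_single (m : α) (c : ℂ) : l1norm (single m c) = ‖c‖ := by
  classical
  rw [l1norm_eq_sum_of_support_subset support_single_subset, Finset.sum_singleton, single_eq_same]

lemma l1norm_single_sub_single_le (a b : α) :
    l1norm (single a (1 : ℂ) - single b 1) ≤ 2 := by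
  rw [sub_eq_add_neg, ← neg_one_smul ℂ (single b 1)]
  calc _ ≤ l1norm (single a (1 : ℂ)) + l1norm ((-1 : ℂ) • single b 1) := l1norm_add_le _ _
    _ = 2 := by rw [l1norm_smul, l1norm_single, l1norm_single]; norm_num

end l1norm

lemma l2norm_le_l1norm (x : ℤ →₀ ℂ) : l2norm x ≤ l1norm x :=
  Real.sqrt_le_iff.mpr ⟨l1norm_nonneg x,
    Finset.sum_sq_le_sq_sum_of_nonneg fun _ _ => norm_nonneg _⟩

lemma A0_single (m : ℤ) (c : ℂ) :
    A0 (single m c) = (c * (-Complex.I * m)) • (single (m + 1) 1 - single (m - 1) 1) := by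
  rw [A0, lsum_single, LinearMap.toSpanSingleton_apply, mul_smul c]

lemma A0_eq_sum (x : ℤ →₀ ℂ) : A0 x = ∑ m ∈ x.support, A0 (single m (x m)) := by
  conv_lhs => rw [← sum_single x]
  exact map_finsuppSum A0 x single

lemma support_A0_single_subset (m : ℤ) (c : ℂ) : (A0 (single m c)).support ⊆ {m + 1, m - 1} := by
  rw [A0_single]
  refine support_smul.trans (support_sub.trans (Finset.union_subset ?_ ?_)) <;>
    exact support_single_subset.trans (by simp)

lemma natAbs_le_of_mem_support_A0 {x : ℤ →₀ ℂ} {N : ℕ} (hx : ∀ m ∈ x.support, m.natAbs ≤ N)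
    {m : ℤ} (hm : m ∈ (A0 x).support) : m.natAbs ≤ N + 1 := by
  classical
  rw [A0_eq_sum] at hm
  obtain ⟨j, hj, hmj⟩ := Finset.mem_biUnion.mp (support_finsetSum hm)
  have := hx j hj
  have := support_A0_single_subset j (x j) hmj
  simp only [Finset.mem_insert, Finset.mem_singleton] at this
  omega

lemma l1norm_A0_single_le (m : ℤ) (c : ℂ) : l1norm (A0 (single m c)) ≤ 2 * m.natAbs * ‖c‖ := by
  rw [A0_single, l1norm_smul]
  have hm : ‖c * (-Complex.I * m)‖ = ‖c‖ * m.natAbs := by simp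
  calc _ ≤ ‖c * (-Complex.I * m)‖ * 2 := by
        gcongr; exact l1norm_single_sub_single_le _ _
    _ = _ := by rw [hm]; ring

lemma l1norm_A0_le {x : ℤ →₀ ℂ} {N : ℕ} (hx : ∀ m ∈ x.support, m.natAbs ≤ N) :
    l1norm (A0 x) ≤ 2 * N * l1norm x := by
  rw [A0_eq_sum]
  refine (l1norm_sum_le _ _).trans ?_
  rw [l1norm, Finset.mul_sum]
  refine Finset.sum_le_sum fun m hm => ?_
  refine (l1norm_A0_single_le m (x m)).trans ?_
  gcongr
  exact hx m hm

lemma natAbs_le_of_mem_support_A0_pow_e {n : ℤ} {k : ℕ} {m : ℤ}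
    (hm : m ∈ ((A0 ^ k) (e n)).support) : m.natAbs ≤ n.natAbs + k := by
  induction k generalizing m with
  | zero =>
    rw [pow_zero, Module.End.one_apply, e] at hm
    rw [Finset.mem_singleton.mp (support_single_subset hm), add_zero]
  | succ k ih =>
    rw [pow_succ', Module.End.mul_apply] at hm
    exact natAbs_le_of_mem_support_A0 (fun _ => ih) hm

lemma l1norm_A0_pow_e_le (n : ℤ) (k : ℕ) :
    l1norm ((A0 ^ k) (e n)) ≤ 2 ^ k * n.natAbs.ascFactorial k := by
  induction k with
  | zero => simp [e, l1norm_single]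
  | succ k ih =>
    rw [pow_succ', Module.End.mul_apply, Nat.ascFactorial_succ]
    calc _ ≤ 2 * (n.natAbs + k : ℕ) * l1norm ((A0 ^ k) (e n)) :=
          l1norm_A0_le fun _ => natAbs_le_of_mem_support_A0_pow_e
      _ ≤ 2 * (n.natAbs + k : ℕ) * (2 ^ k * n.natAbs.ascFactorial k) := by gcongr
      _ = _ := by push_cast; ring

lemma cast_ascFactorial_eq_factorial_div {K : Type*} [Field K] [CharZero K] {n : ℕ} (hn : 0 < n)
    (k : ℕ) : (n.ascFactorial k : K) = (n + k - 1).factorial / (n - 1).factorial := by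
  rw [← Nat.factorial_mul_ascFactorial' n k hn, Nat.cast_mul, mul_div_cancel_left₀]
  exact Nat.cast_ne_zero.mpr (n - 1).factorial_ne_zero

/-- For `n ≠ 0`, `‖A₀ᵏ eₙ‖ ≤ 2ᵏ (|n|+k-1)!/(|n|-1)!`. -/
theorem norm_A0_pow_e_le (k : ℕ) (n : ℤ) (hn : n ≠ 0) :
    l2norm ((A0 ^ k) (e n)) ≤
      2 ^ k * (Nat.factorial (n.natAbs + k - 1) : ℝ) / (Nat.factorial (n.natAbs - 1) : ℝ) := by
  rw [mul_div_assoc, ← cast_ascFactorial_eq_factorial_div (Int.natAbs_pos.mpr hn)]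
  exact (l2norm_le_l1norm _).trans (l1norm_A0_pow_e_le n k)
end
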